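/- For all real σ₁, σ₂ ≥ 0, the squared Wasserstein-2 distance between the centered one-dimensional Gaussian measures with variances σ₁² and σ₂² equals (σ₁ − σ₂)²; that is, the infimum over all probability measures π on ℝ × ℝ whose first marginal is the Gaussian N(0, σ₁²) and whose second marginal is the Gaussian N(0, σ₂²) of ∫ (x − y)² dπ(x, y) equals (σ₁ − σ₂)². -/

import Mathlib

/-!
Any coupling `π` of `N(0, σ₁²)` and `N(0, σ₂²)` has `∫ x² dπ = σ₁²`, `∫ y² dπ = σ₂²` and, by
Cauchy–Schwarz, `∫ x y dπ ≤ σ₁ σ₂`, so `∫ (x − y)² dπ ≥ σ₁² − 2 σ₁ σ₂ + σ₂² = (σ₁ − σ₂)²`. The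
bound is attained by the comonotone coupling, the law of `(σ₁ Z, σ₂ Z)` with `Z ~ N(0, 1)`, whose
cost is `(σ₁ − σ₂)² 𝔼[Z²] = (σ₁ − σ₂)²`.
-/

open MeasureTheory ProbabilityTheory
open scoped NNReal

section CauchySchwarz

variable {α : Type*} [MeasurableSpace α] {μ : Measure α} {f g : α → ℝ}

theorem integral_mul_le_sqrt_integral_sq_mul_sqrt (hf : MemLp f 2 μ) (hg : MemLp g 2 μ) :
    ∫ x, f x * g x ∂μ ≤ √(∫ x, f x ^ 2 ∂μ) * √(∫ x, g x ^ 2 ∂μ) := by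
  have hf' : MemLp (fun x ↦ |f x|) (ENNReal.ofReal 2) μ := by
    rw [ENNReal.ofReal_ofNat]; exact hf.abs
  have hg' : MemLp (fun x ↦ |g x|) (ENNReal.ofReal 2) μ := by
    rw [ENNReal.ofReal_ofNat]; exact hg.abs
  calc ∫ x, f x * g x ∂μ ≤ ∫ x, |f x| * |g x| ∂μ :=
        integral_mono (hf.integrable_mul hg) (by simpa [abs_mul] using (hf.integrable_mul hg).abs)
          fun x ↦ by simpa [abs_mul] using le_abs_self (f x * g x)
    _ ≤ (∫ x, |f x| ^ (2 : ℝ) ∂μ) ^ (1 / 2 : ℝ) * (∫ x, |g x| ^ (2 : ℝ) ∂μ) ^ (1 / 2 : ℝ) :=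
        integral_mul_le_Lp_mul_Lq_of_nonneg Real.HolderConjugate.two_two
          (.of_forall fun _ ↦ abs_nonneg _) (.of_forall fun _ ↦ abs_nonneg _) hf' hg'
    _ = √(∫ x, f x ^ 2 ∂μ) * √(∫ x, g x ^ 2 ∂μ) := by
        simp only [Real.rpow_two, sq_abs, Real.sqrt_eq_rpow]

/-- The reverse triangle inequality in `L²`, squared. -/
theorem sq_sqrt_integral_sq_sub_le_integral_sq_sub (hf : MemLp f 2 μ) (hg : MemLp g 2 μ) :
    (√(∫ x, f x ^ 2 ∂μ) - √(∫ x, g x ^ 2 ∂μ)) ^ 2 ≤ ∫ x, (f x - g x) ^ 2 ∂μ := by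
  have hfg : Integrable (fun x ↦ 2 * (f x * g x)) μ := (hf.integrable_mul hg).const_mul 2
  have hexpand : ∫ x, (f x - g x) ^ 2 ∂μ
      = ∫ x, f x ^ 2 ∂μ - 2 * ∫ x, f x * g x ∂μ + ∫ x, g x ^ 2 ∂μ := by
    calc ∫ x, (f x - g x) ^ 2 ∂μ = ∫ x, (f x ^ 2 - 2 * (f x * g x)) + g x ^ 2 ∂μ := by
          congr 1 with x; ring
      _ = _ := by
          rw [integral_add (f := fun x ↦ f x ^ 2 - 2 * (f x * g x)) (hf.integrable_sq.sub hfg)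
            hg.integrable_sq, integral_sub hf.integrable_sq hfg, integral_const_mul]
  rw [hexpand, sub_sq, Real.sq_sqrt (integral_nonneg fun _ ↦ sq_nonneg _),
    Real.sq_sqrt (integral_nonneg fun _ ↦ sq_nonneg _)]
  linarith [integral_mul_le_sqrt_integral_sq_mul_sqrt hf hg]

end CauchySchwarz

theorem integral_sq_gaussianReal_zero (v : ℝ≥0) : ∫ x, x ^ 2 ∂gaussianReal 0 v = v := by
  rw [← variance_fun_id_gaussianReal (μ := 0) (v := v),
    variance_of_integral_eq_zero aemeasurable_id' integral_id_gaussianReal]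

section Marginal

variable {Ω : Type*} [MeasurableSpace Ω] {P : Measure Ω} {X : Ω → ℝ} {v : ℝ≥0}

theorem memLp_two_of_map_eq_gaussianReal (hX : Measurable X) (h : P.map X = gaussianReal 0 v) :
    MemLp X 2 P := by
  have := memLp_id_gaussianReal (μ := 0) (v := v) 2
  rw [← h, memLp_map_measure_iff aestronglyMeasurable_id hX.aemeasurable] at this
  exact_mod_cast this

theorem integral_sq_of_map_eq_gaussianReal (hX : Measurable X) (h : P.map X = gaussianReal 0 v) :
    ∫ ω, X ω ^ 2 ∂P = v := by
  rw [← integral_sq_gaussianReal_zero v, ← h,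
    integral_map hX.aemeasurable (by fun_prop)]

end Marginal

theorem sq_sub_le_integral_sq_sub_of_marginals_gaussianReal {σ₁ σ₂ : ℝ}
    (h₁ : 0 ≤ σ₁) (h₂ : 0 ≤ σ₂) {π : Measure (ℝ × ℝ)}
    (hfst : π.map Prod.fst = gaussianReal 0 (⟨σ₁ ^ 2, sq_nonneg σ₁⟩ : ℝ≥0))
    (hsnd : π.map Prod.snd = gaussianReal 0 (⟨σ₂ ^ 2, sq_nonneg σ₂⟩ : ℝ≥0)) :
    (σ₁ - σ₂) ^ 2 ≤ ∫ p, (p.1 - p.2) ^ 2 ∂π := by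
  have := sq_sqrt_integral_sq_sub_le_integral_sq_sub
    (memLp_two_of_map_eq_gaussianReal measurable_fst hfst)
    (memLp_two_of_map_eq_gaussianReal measurable_snd hsnd)
  rw [integral_sq_of_map_eq_gaussianReal measurable_fst hfst,
    integral_sq_of_map_eq_gaussianReal measurable_snd hsnd] at this
  change (√(σ₁ ^ 2) - √(σ₂ ^ 2)) ^ 2 ≤ _ at this
  rwa [Real.sqrt_sq h₁, Real.sqrt_sq h₂] at this

theorem gaussianReal_zero_one_map_const_mul (σ : ℝ) :
    (gaussianReal 0 1).map (σ * ·) = gaussianReal 0 (⟨σ ^ 2, sq_nonneg σ⟩ : ℝ≥0) := by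
  rw [gaussianReal_map_const_mul, mul_zero, mul_one]
  rfl

noncomputable def comonotoneGaussianCoupling (σ₁ σ₂ : ℝ) : Measure (ℝ × ℝ) :=
  (gaussianReal 0 1).map fun x ↦ (σ₁ * x, σ₂ * x)

namespace comonotoneGaussianCoupling

instance (σ₁ σ₂ : ℝ) : IsProbabilityMeasure (comonotoneGaussianCoupling σ₁ σ₂) :=
  Measure.isProbabilityMeasure_map (by fun_prop)

theorem map_fst (σ₁ σ₂ : ℝ) :
    (comonotoneGaussianCoupling σ₁ σ₂).map Prod.fst
      = gaussianReal 0 (⟨σ₁ ^ 2, sq_nonneg σ₁⟩ : ℝ≥0) := by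
  rw [comonotoneGaussianCoupling, Measure.map_map measurable_fst (by fun_prop)]
  exact gaussianReal_zero_one_map_const_mul σ₁

theorem map_snd (σ₁ σ₂ : ℝ) :
    (comonotoneGaussianCoupling σ₁ σ₂).map Prod.snd
      = gaussianReal 0 (⟨σ₂ ^ 2, sq_nonneg σ₂⟩ : ℝ≥0) := by
  rw [comonotoneGaussianCoupling, Measure.map_map measurable_snd (by fun_prop)]
  exact gaussianReal_zero_one_map_const_mul σ₂

theorem integral_sq_sub (σ₁ σ₂ : ℝ) :
    ∫ p, (p.1 - p.2) ^ 2 ∂comonotoneGaussianCoupling σ₁ σ₂ = (σ₁ - σ₂) ^ 2 := by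
  rw [comonotoneGaussianCoupling, integral_map (by fun_prop) (by fun_prop)]
  simp_rw [← sub_mul, mul_pow]
  rw [integral_const_mul, integral_sq_gaussianReal_zero, NNReal.coe_one, mul_one]

end comonotoneGaussianCoupling

theorem statement7 (σ₁ σ₂ : ℝ) (h₁ : 0 ≤ σ₁) (h₂ : 0 ≤ σ₂) :
    sInf { c : ℝ | ∃ π : Measure (ℝ × ℝ), IsProbabilityMeasure π ∧
        π.map Prod.fst = gaussianReal 0 (⟨σ₁ ^ 2, sq_nonneg σ₁⟩ : NNReal) ∧
        π.map Prod.snd = gaussianReal 0 (⟨σ₂ ^ 2, sq_nonneg σ₂⟩ : NNReal) ∧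
        c = ∫ p, (p.1 - p.2) ^ 2 ∂π } = (σ₁ - σ₂) ^ 2 := by
  refine IsLeast.csInf_eq ⟨?_, ?_⟩
  · exact ⟨comonotoneGaussianCoupling σ₁ σ₂, inferInstance,
      comonotoneGaussianCoupling.map_fst σ₁ σ₂, comonotoneGaussianCoupling.map_snd σ₁ σ₂,
      (comonotoneGaussianCoupling.integral_sq_sub σ₁ σ₂).symm⟩
  · rintro c ⟨π, -, hfst, hsnd, rfl⟩
    exact sq_sub_le_integral_sq_sub_of_marginals_gaussianReal h₁ h₂ hfst hsnd
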